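/- Let T be a bounded totally paranormal operator and μ a nonzero isolated point of σ(T). Then ker(T − μI) = ker(T* − μ̄I), and the Riesz projection E_μ is self-adjoint (an orthogonal projection). -/

import Mathlib

/-!
Write `S = T - μ`. The Riesz projection `E` satisfies `S E = 0` and `1 - E = S Q` for some `Q`.
The second identity comes from integrating `(z - μ)⁻¹` times the resolvent. For the first,
shrinking the contour to circles of radius `ρ → 0` gives `‖Sⁿ E‖ ≤ C_ρ ρⁿ`, and for a paranormal
operator `‖Sⁿ v‖ ≤ C ρⁿ` forces `‖S v‖ ≤ ρ ‖v‖` (paranormality gives `‖S v‖ⁿ ≤ ‖Sⁿ v‖ ‖v‖ⁿ⁻¹`).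

If `S x = 0`, paranormality of `S + 1 = T - (μ - 1)` applied to `u = c x + y`, in the form
`2 ‖(S + 1) u‖² ≤ ‖(S + 1)² u‖² + ‖u‖²`, is an inequality affine in `c ∈ ℂ` whose linear part is
`re (conj c ⟪x, S² y⟫)`; hence `ker S ⊥ ran S²`. As `S = S² Q`, this means `ker S ⊥ ran S`,
i.e. `ker S ⊆ ker S*`. Finally every vector splits as `E x + (x - E x) ∈ ker S + ran S`, which gives
both `ker S* ⊆ ker S` and the self-adjointness of `E`.
-/

open Metric

section Paranormal

open Filter Topology

def IsParanormal {𝕜 E : Type*} [RCLike 𝕜] [NormedAddCommGroup E] [NormedSpace 𝕜 E]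
    (A : E →L[𝕜] E) : Prop :=
  ∀ u, ‖A u‖ ^ 2 ≤ ‖A (A u)‖ * ‖u‖

namespace IsParanormal

variable {𝕜 E : Type*} [RCLike 𝕜] [NormedAddCommGroup E] [NormedSpace 𝕜 E] {A : E →L[𝕜] E}

theorem norm_apply_pow_le (hA : IsParanormal A) (n : ℕ) (v : E) :
    ‖A v‖ ^ (n + 1) ≤ ‖(A ^ (n + 1)) v‖ * ‖v‖ ^ n := by
  induction n generalizing v with
  | zero => simp
  | succ n ih =>
    rcases (norm_nonneg (A v)).eq_or_lt with h0 | hpos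
    · rw [← h0, zero_pow (Nat.succ_ne_zero _)]; positivity
    have hstep : ‖A (A v)‖ ^ (n + 1) ≤ ‖(A ^ (n + 2)) v‖ * ‖A v‖ ^ n := by
      simpa only [pow_succ A (n + 1), mul_apply_eq_comp] using ih (A v)
    refine le_of_mul_le_mul_right ?_ (pow_pos hpos n)
    calc ‖A v‖ ^ (n + 2) * ‖A v‖ ^ n = (‖A v‖ ^ 2) ^ (n + 1) := by ring
      _ ≤ (‖A (A v)‖ * ‖v‖) ^ (n + 1) := by gcongr; exact hA v
      _ = ‖A (A v)‖ ^ (n + 1) * ‖v‖ ^ (n + 1) := mul_pow _ _ _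
      _ ≤ ‖(A ^ (n + 2)) v‖ * ‖A v‖ ^ n * ‖v‖ ^ (n + 1) := by gcongr
      _ = _ := by ring

theorem norm_apply_le_of_norm_pow_apply_le (hA : IsParanormal A) {v : E} {ρ C : ℝ} (hρ : 0 < ρ)
    (hv : ∀ n, ‖(A ^ n) v‖ ≤ C * ρ ^ n) : ‖A v‖ ≤ ρ * ‖v‖ := by
  by_contra! hlt
  have hv0 : 0 < ‖v‖ := by
    by_contra! h
    simp [norm_le_zero_iff.mp h] at hlt
  set q := ‖A v‖ / (ρ * ‖v‖)
  have hq : 1 < q := (one_lt_div (by positivity)).mpr hlt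
  obtain ⟨n, hn⟩ := pow_unbounded_of_one_lt (C / ‖v‖) hq
  have : q ^ (n + 1) ≤ C / ‖v‖ := by
    rw [div_pow, div_le_div_iff₀ (by positivity) hv0]
    calc ‖A v‖ ^ (n + 1) * ‖v‖ ≤ ‖(A ^ (n + 1)) v‖ * ‖v‖ ^ n * ‖v‖ := by
          gcongr; exact hA.norm_apply_pow_le n v
      _ ≤ C * ρ ^ (n + 1) * ‖v‖ ^ n * ‖v‖ := by gcongr; exact hv _
      _ = C * (ρ * ‖v‖) ^ (n + 1) := by ring
  linarith [pow_le_pow_right₀ hq.le (Nat.le_add_right n 1)]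

theorem apply_eq_zero_of_norm_pow_apply_le (hA : IsParanormal A) {v : E}
    (hv : ∀ᶠ ρ in 𝓝[>] 0, ∃ C, ∀ n, ‖(A ^ n) v‖ ≤ C * ρ ^ n) : A v = 0 := by
  have hle : ∀ᶠ ρ in 𝓝[>] (0 : ℝ), ‖A v‖ ≤ ρ * ‖v‖ := by
    filter_upwards [hv, self_mem_nhdsWithin] with ρ ⟨C, hC⟩ hρ
    exact hA.norm_apply_le_of_norm_pow_apply_le hρ hC
  have hlim : Tendsto (fun ρ : ℝ => ρ * ‖v‖) (𝓝[>] 0) (𝓝 0) := by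
    simpa using (tendsto_id.mul_const ‖v‖).mono_left (nhdsWithin_le_nhds (a := (0 : ℝ)))
  exact norm_le_zero_iff.mp (ge_of_tendsto hlim hle)

theorem two_mul_norm_sq_le (hA : IsParanormal A) (u : E) :
    2 * ‖A u‖ ^ 2 ≤ ‖A (A u)‖ ^ 2 + ‖u‖ ^ 2 := by
  nlinarith [hA u, sq_nonneg (‖A (A u)‖ - ‖u‖)]

end IsParanormal

end Paranormal

section InnerProduct

open RCLike ComplexConjugate

variable {𝕜 H : Type*} [RCLike 𝕜] [NormedAddCommGroup H] [InnerProductSpace 𝕜 H]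

theorem RCLike.eq_zero_of_forall_re_conj_mul_add_nonneg {z : 𝕜} {K : ℝ}
    (h : ∀ c : 𝕜, 0 ≤ re (conj c * z) + K) : z = 0 := by
  by_contra hz
  have hz2 : 0 < ‖z‖ ^ 2 := by positivity
  set t := (K + 1) / ‖z‖ ^ 2
  have hc : conj (-(t : 𝕜) * z) * z = ((-(t * ‖z‖ ^ 2)) : ℝ) := by
    rw [map_mul, map_neg, conj_ofReal, neg_mul, neg_mul, mul_assoc, RCLike.conj_mul]
    push_cast
    ring
  have ht := h (-(t : 𝕜) * z)
  rw [hc, ofReal_re, show t * ‖z‖ ^ 2 = K + 1 by simp only [t]; field_simp] at ht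
  linarith

theorem IsParanormal.inner_apply_apply_eq_zero {S : H →L[𝕜] H} (hS : IsParanormal (S + 1))
    {x : H} (hx : S x = 0) (y : H) : inner 𝕜 x (S (S y)) = 0 := by
  set v := S y
  set w := S v
  refine RCLike.eq_zero_of_forall_re_conj_mul_add_nonneg
    (K := re (inner 𝕜 y w) + ‖v‖ ^ 2 + 2 * re (inner 𝕜 v w) + ‖w‖ ^ 2 / 2) fun c => ?_
  set u := c • x + y
  have h1 : (S + 1) u = u + v := by
    simp only [add_apply, map_add, map_smul, hx, zero_add, one_apply_eq_self, u, v]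
    abel
  have h2 : (S + 1) (u + v) = u + (2 : 𝕜) • v + w := by
    simp only [add_apply, map_add, map_smul, hx, zero_add, one_apply_eq_self, u, v, w]
    module
  have hpara := hS.two_mul_norm_sq_le u
  rw [h1, h2] at hpara
  have expand : ‖u + (2 : 𝕜) • v + w‖ ^ 2 - 2 * ‖u + v‖ ^ 2 + ‖u‖ ^ 2
      = 2 * re (inner 𝕜 u w) + 2 * ‖v‖ ^ 2 + 4 * re (inner 𝕜 v w) + ‖w‖ ^ 2 := by
    rw [norm_add_sq (𝕜 := 𝕜) (u + (2 : 𝕜) • v), norm_add_sq (𝕜 := 𝕜) u, norm_add_sq (𝕜 := 𝕜) u]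
    simp only [inner_add_left, inner_smul_left, inner_smul_right, map_add, norm_smul, mul_re,
      ofNat_re, ofNat_im, zero_mul, sub_zero, norm_ofNat, conj_re, conj_im, neg_zero]
    ring
  have hu : re (inner 𝕜 u w) = re (conj c * inner 𝕜 x w) + re (inner 𝕜 y w) := by
    simp only [u, inner_add_left, inner_smul_left, map_add]
  linarith

end InnerProduct

section RieszProjection

open Complex Real

theorem ContinuousLinearMap.circleIntegral_comp_comm {E F : Type*} [NormedAddCommGroup E]
    [NormedSpace ℂ E] [CompleteSpace E] [NormedAddCommGroup F] [NormedSpace ℂ F] [CompleteSpace F]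
    (L : E →L[ℂ] F) {f : ℂ → E} {c : ℂ} {R : ℝ} (hf : CircleIntegrable f c R) :
    ∮ z in C(c, R), L (f z) = L (∮ z in C(c, R), f z) := by
  simp only [circleIntegral, ← L.intervalIntegral_comp_comm hf.out, L.map_smul]

theorem circleIntegral_sub_pow (c w : ℂ) (R : ℝ) (n : ℕ) : ∮ z in C(c, R), (z - w) ^ n = 0 := by
  simpa using circleIntegral.integral_sub_zpow_of_ne (n := n) (by omega) c w R

variable {A : Type*} [NormedRing A] [NormedAlgebra ℂ A]

noncomputable def rieszProjection (a : A) (μ : ℂ) (r : ℝ) : A :=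
  (2 * π * I)⁻¹ • ∮ z in C(μ, r), resolvent a z

theorem resolvent_eq_ring_inverse (a : A) (z : ℂ) : resolvent a z = Ring.inverse (z • 1 - a) := by
  rw [resolvent, Algebra.algebraMap_eq_smul_one]

variable {a : A} {μ : ℂ} {r : ℝ}

theorem sub_smul_one_mul_resolvent {z : ℂ} (hz : z ∈ resolventSet ℂ a) :
    (a - μ • 1) * resolvent a z = (z - μ) • resolvent a z - 1 := by
  have hinv : (z • 1 - a) * resolvent a z = 1 := by
    rw [resolvent_eq_ring_inverse]
    exact Ring.mul_inverse_cancel _ (by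
      simpa [Algebra.algebraMap_eq_smul_one] using spectrum.mem_resolventSet_iff.mp hz)
  rw [show a - μ • 1 = (z - μ) • 1 - (z • 1 - a) by rw [sub_smul]; abel, sub_mul, hinv,
    smul_one_mul]

theorem mem_resolventSet_of_isolated (hsep : closedBall μ r ∩ spectrum ℂ a ⊆ {μ}) {z : ℂ}
    (hz : z ∈ closedBall μ r) (hzμ : z ≠ μ) : z ∈ resolventSet ℂ a := by
  by_contra hσ
  exact hzμ (hsep ⟨hz, hσ⟩)

theorem differentiableAt_resolvent_of_isolated [CompleteSpace A]
    (hsep : closedBall μ r ∩ spectrum ℂ a ⊆ {μ}) {z : ℂ} (hz : z ∈ closedBall μ r) (hzμ : z ≠ μ) :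
    DifferentiableAt ℂ (resolvent a) z :=
  (spectrum.hasDerivAt_resolvent_const_left
    (mem_resolventSet_of_isolated hsep hz hzμ)).differentiableAt

theorem continuousOn_resolvent_of_isolated [CompleteSpace A]
    (hsep : closedBall μ r ∩ spectrum ℂ a ⊆ {μ}) {s : Set ℂ} (hs : s ⊆ closedBall μ r \ {μ}) :
    ContinuousOn (resolvent a) s :=
  fun _ hz => (differentiableAt_resolvent_of_isolated hsep (hs hz).1
    (hs hz).2).continuousAt.continuousWithinAt

theorem sphere_subset_closedBall_diff_singleton {ρ : ℝ} (hρ : 0 < ρ) (hρr : ρ ≤ r) :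
    sphere μ ρ ⊆ closedBall μ r \ {μ} :=
  fun _ hz => ⟨closedBall_subset_closedBall hρr (sphere_subset_closedBall hz), by
    rintro rfl; simp [hρ.ne] at hz⟩

theorem circleIntegrable_smul_resolvent [CompleteSpace A]
    (hsep : closedBall μ r ∩ spectrum ℂ a ⊆ {μ}) {ρ : ℝ} (hρ : 0 < ρ) (hρr : ρ ≤ r) {g : ℂ → ℂ}
    (hg : ContinuousOn g (sphere μ ρ)) : CircleIntegrable (fun z => g z • resolvent a z) μ ρ :=
  (hg.smul (continuousOn_resolvent_of_isolated hsep
    (sphere_subset_closedBall_diff_singleton hρ hρr))).circleIntegrable hρ.le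

theorem mul_circleIntegral_smul_resolvent [CompleteSpace A]
    (hsep : closedBall μ r ∩ spectrum ℂ a ⊆ {μ}) (hr : 0 < r) {g : ℂ → ℂ}
    (hg : ContinuousOn g (sphere μ r)) :
    (a - μ • 1) * ∮ z in C(μ, r), g z • resolvent a z =
      (∮ z in C(μ, r), (g z * (z - μ)) • resolvent a z) - (∮ z in C(μ, r), g z) • 1 := by
  have hres := sphere_subset_closedBall_diff_singleton (μ := μ) hr le_rfl
  have hg' : ContinuousOn (fun z => g z * (z - μ)) (sphere μ r) := by fun_prop
  have hg1 : CircleIntegrable (fun z => g z • (1 : A)) μ r :=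
    (hg.smul continuousOn_const).circleIntegrable hr.le
  rw [← ContinuousLinearMap.mul_apply' ℂ, ← ContinuousLinearMap.circleIntegral_comp_comm _
    (circleIntegrable_smul_resolvent hsep hr le_rfl hg), ← circleIntegral.integral_smul_const,
    ← circleIntegral.integral_sub (circleIntegrable_smul_resolvent hsep hr le_rfl hg') hg1]
  refine circleIntegral.integral_congr hr.le fun z hz => ?_
  have hz' := hres hz
  simp only [ContinuousLinearMap.mul_apply', mul_smul_comm,
    sub_smul_one_mul_resolvent (mem_resolventSet_of_isolated hsep hz'.1 hz'.2), smul_sub,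
    smul_smul]

theorem sub_smul_one_pow_mul_rieszProjection [CompleteSpace A]
    (hsep : closedBall μ r ∩ spectrum ℂ a ⊆ {μ}) (hr : 0 < r) (n : ℕ) :
    (a - μ • 1) ^ n * rieszProjection a μ r =
      (2 * π * I)⁻¹ • ∮ z in C(μ, r), (z - μ) ^ n • resolvent a z := by
  induction n with
  | zero => simp [rieszProjection]
  | succ n ih =>
    rw [pow_succ', mul_assoc, ih, mul_smul_comm,
      mul_circleIntegral_smul_resolvent hsep hr (by fun_prop), circleIntegral_sub_pow, zero_smul,
      sub_zero]
    simp only [pow_succ]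

theorem circleIntegral_sub_pow_smul_resolvent_eq [CompleteSpace A]
    (hsep : closedBall μ r ∩ spectrum ℂ a ⊆ {μ}) (n : ℕ) {ρ : ℝ} (hρ : 0 < ρ) (hρr : ρ ≤ r) :
    ∮ z in C(μ, r), (z - μ) ^ n • resolvent a z = ∮ z in C(μ, ρ), (z - μ) ^ n • resolvent a z := by
  have hannulus : closedBall μ r \ ball μ ρ ⊆ closedBall μ r \ {μ} :=
    fun z hz => ⟨hz.1, by rintro rfl; exact hz.2 (mem_ball_self hρ)⟩
  refine circleIntegral_eq_of_differentiable_on_annulus_off_countable hρ hρr Set.countable_empty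
    ((by fun_prop : Continuous fun z : ℂ => (z - μ) ^ n).continuousOn.smul
      (continuousOn_resolvent_of_isolated hsep hannulus)) fun z hz => ?_
  have hz' := hannulus ⟨ball_subset_closedBall hz.1.1, fun h => hz.1.2 (ball_subset_closedBall h)⟩
  exact ((differentiableAt_id.sub_const μ).pow n).smul
    (differentiableAt_resolvent_of_isolated hsep hz'.1 hz'.2)

theorem exists_norm_sub_smul_one_pow_mul_rieszProjection_le [CompleteSpace A]
    (hsep : closedBall μ r ∩ spectrum ℂ a ⊆ {μ}) {ρ : ℝ} (hρ : 0 < ρ) (hρr : ρ ≤ r) :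
    ∃ C, ∀ n : ℕ, ‖(a - μ • 1) ^ n * rieszProjection a μ r‖ ≤ C * ρ ^ n := by
  obtain ⟨M, hM⟩ := (isCompact_sphere μ ρ).exists_bound_of_continuousOn
    (continuousOn_resolvent_of_isolated hsep (sphere_subset_closedBall_diff_singleton hρ hρr))
  refine ⟨ρ * M, fun n => ?_⟩
  rw [sub_smul_one_pow_mul_rieszProjection hsep (hρ.trans_le hρr),
    circleIntegral_sub_pow_smul_resolvent_eq hsep n hρ hρr]
  calc _ ≤ ρ * (ρ ^ n * M) := by
        refine circleIntegral.norm_two_pi_i_inv_smul_integral_le_of_norm_le_const hρ.le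
          fun z hz => ?_
        rw [norm_smul, norm_pow, ← dist_eq_norm, mem_sphere.mp hz]
        gcongr
        exact hM z hz
    _ = ρ * M * ρ ^ n := by ring

theorem exists_one_sub_rieszProjection_eq_mul [CompleteSpace A]
    (hsep : closedBall μ r ∩ spectrum ℂ a ⊆ {μ}) (hr : 0 < r) :
    ∃ q, 1 - rieszProjection a μ r = (a - μ • 1) * q := by
  refine ⟨-((2 * π * I)⁻¹ • ∮ z in C(μ, r), (z - μ)⁻¹ • resolvent a z), ?_⟩
  have hne : ∀ z ∈ sphere μ r, z - μ ≠ 0 := fun z hz =>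
    sub_ne_zero.mpr (sphere_subset_closedBall_diff_singleton hr le_rfl hz).2
  have hinv : ∀ z ∈ sphere μ r, (z - μ)⁻¹ * (z - μ) = 1 := fun z hz => inv_mul_cancel₀ (hne z hz)
  have hcont : ContinuousOn (fun z => (z - μ)⁻¹) (sphere μ r) :=
    (continuousOn_id.sub continuousOn_const).inv₀ hne
  rw [mul_neg, mul_smul_comm, mul_circleIntegral_smul_resolvent hsep hr hcont,
    circleIntegral.integral_congr hr.le fun z hz => by rw [hinv z hz, one_smul],
    circleIntegral.integral_sub_inv_of_mem_ball (mem_ball_self hr), rieszProjection, smul_sub,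
    smul_smul, inv_mul_cancel₀ (by simp [pi_ne_zero]), one_smul, neg_sub]

end RieszProjection

theorem IsParanormal.mul_rieszProjection_eq_zero {X : Type*} [NormedAddCommGroup X]
    [NormedSpace ℂ X] [CompleteSpace X] {T : X →L[ℂ] X} {μ : ℂ} {r : ℝ}
    (hT : IsParanormal (T - μ • 1)) (hr : 0 < r) (hsep : closedBall μ r ∩ spectrum ℂ T ⊆ {μ}) :
    (T - μ • 1) * rieszProjection T μ r = 0 := by
  ext x
  refine hT.apply_eq_zero_of_norm_pow_apply_le ?_
  filter_upwards [Ioo_mem_nhdsGT hr] with ρ hρ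
  obtain ⟨C, hC⟩ := exists_norm_sub_smul_one_pow_mul_rieszProjection_le hsep hρ.1 hρ.2.le
  refine ⟨C * ‖x‖, fun n => ?_⟩
  calc ‖((T - μ • 1) ^ n) (rieszProjection T μ r x)‖
      = ‖((T - μ • 1) ^ n * rieszProjection T μ r) x‖ := rfl
    _ ≤ ‖(T - μ • 1) ^ n * rieszProjection T μ r‖ * ‖x‖ := ContinuousLinearMap.le_opNorm _ _
    _ ≤ C * ‖x‖ * ρ ^ n := by rw [mul_right_comm]; gcongr; exact hC n

theorem eq_mul_mul_of_mul_eq_zero {R : Type*} [Ring R] {s e q : R} (hse : s * e = 0)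
    (hq : 1 - e = s * q) : s = s * s * q :=
  calc s = s * (1 - e) + s * e := by noncomm_ring
    _ = s * s * q := by rw [hq, hse, add_zero, mul_assoc]

namespace ContinuousLinearMap

variable {𝕜 H : Type*} [RCLike 𝕜] [NormedAddCommGroup H] [InnerProductSpace 𝕜 H]
  [CompleteSpace H] {S E Q : H →L[𝕜] H}

theorem ker_le_ker_adjoint_of_eq_mul_mul (hS : S = S * S * Q)
    (h : ∀ x, S x = 0 → ∀ y, inner 𝕜 x (S (S y)) = 0) : S.ker ≤ (adjoint S).ker := by
  intro x hx
  rw [← orthogonal_range, Submodule.mem_orthogonal']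
  rintro _ ⟨y, rfl⟩
  rw [coe_coe, DFunLike.congr_fun hS y]
  exact h x hx (Q y)

theorem inner_apply_sub_apply_eq_zero (hSE : S * E = 0) (hQ : 1 - E = S * Q)
    (hker : S.ker ≤ (adjoint S).ker) (u v : H) : inner 𝕜 (E u) (v - E v) = 0 := by
  have hEu : adjoint S (E u) = 0 := hker (DFunLike.congr_fun hSE u)
  rw [show v - E v = S (Q v) from DFunLike.congr_fun hQ v, ← adjoint_inner_left, hEu,
    inner_zero_left]

theorem ker_adjoint_le_ker (hSE : S * E = 0) (hQ : 1 - E = S * Q)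
    (hker : S.ker ≤ (adjoint S).ker) : (adjoint S).ker ≤ S.ker := by
  intro x (hx : adjoint S x = 0)
  have h1 : inner 𝕜 x (x - E x) = 0 := by
    rw [show x - E x = S (Q x) from DFunLike.congr_fun hQ x, ← adjoint_inner_left, hx,
      inner_zero_left]
  have h2 := inner_apply_sub_apply_eq_zero hSE hQ hker x x
  have hfix : x = E x := sub_eq_zero.mp <| (inner_self_eq_zero (𝕜 := 𝕜)).mp <| by
    rw [inner_sub_left, h1, h2, sub_zero]
  rw [LinearMap.mem_ker, coe_coe, hfix]
  exact DFunLike.congr_fun hSE x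

theorem isSelfAdjoint_of_mul_eq_zero (hSE : S * E = 0) (hQ : 1 - E = S * Q)
    (hker : S.ker ≤ (adjoint S).ker) : IsSelfAdjoint E := by
  rw [isSelfAdjoint_iff_isSymmetric]
  intro u v
  have h1 := inner_apply_sub_apply_eq_zero hSE hQ hker u v
  have h2 := inner_apply_sub_apply_eq_zero hSE hQ hker v u
  rw [inner_sub_right, sub_eq_zero] at h1 h2
  simp only [coe_coe]
  rw [h1, ← inner_conj_symm u (E v), h2, inner_conj_symm]

end ContinuousLinearMap

theorem stmt_13_general {H : Type*} [NormedAddCommGroup H] [InnerProductSpace ℂ H]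
    [CompleteSpace H] (T : H →L[ℂ] H)
    (hT : ∀ (lam : ℂ) (x : H),
      ‖(T - lam • 1) x‖ ^ 2 ≤ ‖((T - lam • 1) ∘L (T - lam • 1)) x‖ * ‖x‖)
    (μ : ℂ)
    (r : ℝ) (hr : 0 < r)
    (hsep : Metric.closedBall μ r ∩ spectrum ℂ T = {μ})
    (E : H →L[ℂ] H)
    (hE : E = ((2 * Real.pi * Complex.I)⁻¹ : ℂ) •
      (∮ z in C(μ, r), Ring.inverse (z • (1 : H →L[ℂ] H) - T))) :
    LinearMap.ker ((T - μ • (1 : H →L[ℂ] H) : H →L[ℂ] H) : H →ₗ[ℂ] H) =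
      LinearMap.ker ((ContinuousLinearMap.adjoint T - (starRingEnd ℂ) μ • (1 : H →L[ℂ] H) : H →L[ℂ] H) : H →ₗ[ℂ] H) ∧
    IsSelfAdjoint E := by
  have hpara : ∀ ν : ℂ, IsParanormal (T - ν • 1) := fun ν u => hT ν u
  have hE' : E = rieszProjection T μ r := by
    simp only [hE, rieszProjection, resolvent_eq_ring_inverse]
  have hS1 : T - (μ - 1) • 1 = T - μ • 1 + 1 := by rw [sub_smul, one_smul]; abel
  have hadj : ContinuousLinearMap.adjoint T - (starRingEnd ℂ) μ • 1 =
      ContinuousLinearMap.adjoint (T - μ • 1) := by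
    simp only [← ContinuousLinearMap.star_eq_adjoint, star_sub, star_smul, star_one]
    rfl
  set S := T - μ • (1 : H →L[ℂ] H)
  have hSE : S * E = 0 := hE' ▸ (hpara μ).mul_rieszProjection_eq_zero hr hsep.subset
  obtain ⟨Q, hQ⟩ := hE' ▸ exists_one_sub_rieszProjection_eq_mul hsep.subset hr
  have hker : S.ker ≤ (ContinuousLinearMap.adjoint S).ker :=
    ContinuousLinearMap.ker_le_ker_adjoint_of_eq_mul_mul (eq_mul_mul_of_mul_eq_zero hSE hQ)
      fun x hx => (hS1 ▸ hpara (μ - 1)).inner_apply_apply_eq_zero hx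
  rw [hadj]
  exact ⟨le_antisymm hker (ContinuousLinearMap.ker_adjoint_le_ker hSE hQ hker),
    ContinuousLinearMap.isSelfAdjoint_of_mul_eq_zero hSE hQ hker⟩

theorem stmt_13 {H : Type*} [NormedAddCommGroup H] [InnerProductSpace ℂ H]
    [CompleteSpace H] (T : H →L[ℂ] H)
    (hT : ∀ (lam : ℂ) (x : H),
      ‖(T - lam • 1) x‖ ^ 2 ≤ ‖((T - lam • 1) ∘L (T - lam • 1)) x‖ * ‖x‖)
    (μ : ℂ) (hμ : μ ∈ spectrum ℂ T) (hμ0 : μ ≠ 0)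
    (r : ℝ) (hr : 0 < r)
    (hsep : Metric.closedBall μ r ∩ spectrum ℂ T = {μ})
    (E : H →L[ℂ] H)
    (hE : E = ((2 * Real.pi * Complex.I)⁻¹ : ℂ) •
      (∮ z in C(μ, r), Ring.inverse (z • (1 : H →L[ℂ] H) - T))) :
    LinearMap.ker ((T - μ • (1 : H →L[ℂ] H) : H →L[ℂ] H) : H →ₗ[ℂ] H) =
      LinearMap.ker ((ContinuousLinearMap.adjoint T - (starRingEnd ℂ) μ • (1 : H →L[ℂ] H) : H →L[ℂ] H) : H →ₗ[ℂ] H) ∧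
    IsSelfAdjoint E :=
  stmt_13_general T hT μ r hr hsep E hE
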